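/- arXiv:1910.05796 — 3 statements merged into one kernel-verified Lean document; each statement's English description precedes it below -/
import Mathlib

section
/- The constant C(κ) = Γ(4/κ)·Γ(12/κ - 1) / (Γ(8/κ)·Γ(8/κ - 1)), defined as the reciprocal of the Gauss hypergeometric value ₂F₁(4/κ, 1-4/κ, 8/κ; 1), satisfies: C(κ) > 1 for κ ∈ (0,4), C(4) = 1, C(κ) ∈ (0,1) for κ ∈ (4,8), and C(8) = 0. -/
/-!
Writing `x = 4/κ`, `C(κ) = Γ(x) Γ(3x-1) / (Γ(2x) Γ(2x-1))`, and the two pairs of arguments have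
the same sum `4x - 1`. Since `log Γ` is strictly convex on `(0, ∞)` (it is `log Γ(x+1) - log x`,
convex plus strictly convex), moving two arguments with a fixed sum closer together strictly
decreases `Γ(u) Γ(v)`. For `x > 1` the pair `(2x-1, 2x)` lies inside `(x, 3x-1)`, so `C > 1`;
for `1/2 < x < 1` the pair `(x, 3x-1)` lies inside `(2x-1, 2x)`, so `C < 1`.
-/

/-- The constant `C(κ) = Γ(4/κ)Γ(12/κ-1)/(Γ(8/κ)Γ(8/κ-1))`,
the reciprocal of the hypergeometric value `₂F₁(4/κ, 1-4/κ, 8/κ; 1)`. -/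
noncomputable def Cconst (κ : ℝ) : ℝ :=
  Real.Gamma (4 / κ) * Real.Gamma (12 / κ - 1) /
    (Real.Gamma (8 / κ) * Real.Gamma (8 / κ - 1))

open Real Set

theorem StrictConvexOn.add_lt_add_of_mem_Ioo {𝕜 : Type*} [Field 𝕜] [LinearOrder 𝕜]
    [IsStrictOrderedRing 𝕜] {s : Set 𝕜} {f : 𝕜 → 𝕜} (hf : StrictConvexOn 𝕜 s f)
    {a b c : 𝕜} (ha : a ∈ s) (hb : b ∈ s) (hac : a < c) (hcb : c < b) :
    f c + f (a + b - c) < f a + f b := by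
  have hba : 0 < b - a := sub_pos.2 (hac.trans hcb)
  set t := (b - c) / (b - a)
  set u := (c - a) / (b - a)
  have ht : 0 < t := div_pos (sub_pos.2 hcb) hba
  have hu : 0 < u := div_pos (sub_pos.2 hac) hba
  have htu : t + u = 1 := by simp only [t, u]; field_simp; ring
  have hc : t • a + u • b = c := by simp only [t, u, smul_eq_mul]; field_simp; ring
  have hd : u • a + t • b = a + b - c := by simp only [t, u, smul_eq_mul]; field_simp; ring
  have h₁ := hf.2 ha hb (hac.trans hcb).ne ht hu htu
  have h₂ := hf.2 ha hb (hac.trans hcb).ne hu ht (by rw [add_comm, htu])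
  rw [hc] at h₁
  rw [hd] at h₂
  simp only [smul_eq_mul] at h₁ h₂
  linear_combination h₁ + h₂ + (f a + f b) * htu

theorem Real.strictConvexOn_log_Gamma : StrictConvexOn ℝ (Ioi 0) (log ∘ Gamma) := by
  have hshift : ConvexOn ℝ (Ioi 0) fun x => log (Gamma (x + 1)) :=
    (convexOn_log_Gamma.translate_left 1).subset
      (fun x (hx : 0 < x) => show (0 : ℝ) < 1 + x by linarith) (convex_Ioi 0)
  refine (hshift.add_strictConvexOn strictConcaveOn_log_Ioi.neg).congr fun x (hx : 0 < x) => ?_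
  simp only [Pi.add_apply, Pi.neg_apply, Function.comp_apply]
  rw [Gamma_add_one hx.ne', log_mul hx.ne' (Gamma_pos_of_pos hx).ne']
  ring

theorem Real.Gamma_mul_Gamma_lt {a b c d : ℝ} (ha : 0 < a) (hac : a < c) (hcb : c < b)
    (hsum : c + d = a + b) : Gamma c * Gamma d < Gamma a * Gamma b := by
  obtain rfl : d = a + b - c := by linarith
  have hpos : ∀ {y}, a ≤ y → 0 < Gamma y := fun hy => Gamma_pos_of_pos (ha.trans_le hy)
  have h := strictConvexOn_log_Gamma.add_lt_add_of_mem_Ioo ha (ha.trans (hac.trans hcb)) hac hcb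
  simp only [Function.comp_apply] at h
  rwa [← log_mul (hpos hac.le).ne' (hpos (by linarith)).ne',
    ← log_mul (hpos le_rfl).ne' (hpos (by linarith)).ne',
    log_lt_log_iff (mul_pos (hpos hac.le) (hpos (by linarith)))
      (mul_pos (hpos le_rfl) (hpos (by linarith)))] at h

theorem Cconst_eq (κ : ℝ) :
    Cconst κ = Gamma (4 / κ) * Gamma (3 * (4 / κ) - 1) /
      (Gamma (2 * (4 / κ) - 1) * Gamma (2 * (4 / κ))) := by
  rw [Cconst, mul_comm (Gamma (8 / κ))]
  ring_nf

theorem stmt_6 :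
    (∀ κ : ℝ, 0 < κ → κ < 4 → 1 < Cconst κ) ∧
    Cconst 4 = 1 ∧
    (∀ κ : ℝ, 4 < κ → κ < 8 → 0 < Cconst κ ∧ Cconst κ < 1) ∧
    Cconst 8 = 0 := by
  -- At `κ = 8` the denominator contains `Γ(0)`, which Mathlib sets to `0` at the pole.
  refine ⟨fun κ hκ hκ4 => ?_, by norm_num [Cconst, Gamma_two], fun κ hκ4 hκ8 => ?_,
    by norm_num [Cconst, Gamma_zero]⟩
  · have hx : 1 < 4 / κ := (one_lt_div hκ).2 hκ4
    rw [Cconst_eq]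
    set x := 4 / κ
    rw [one_lt_div (mul_pos (Gamma_pos_of_pos (by linarith)) (Gamma_pos_of_pos (by linarith)))]
    exact Gamma_mul_Gamma_lt (by linarith) (by linarith) (by linarith) (by ring)
  · have hx : 4 / κ < 1 := (div_lt_one (by linarith)).2 hκ4
    have hx' : 1 / 2 < 4 / κ := by rw [lt_div_iff₀ (by linarith)]; linarith
    rw [Cconst_eq]
    set x := 4 / κ
    have hden : 0 < Gamma (2 * x - 1) * Gamma (2 * x) :=
      mul_pos (Gamma_pos_of_pos (by linarith)) (Gamma_pos_of_pos (by linarith))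
    refine ⟨div_pos (mul_pos (Gamma_pos_of_pos (by linarith)) (Gamma_pos_of_pos (by linarith)))
      hden, (div_lt_one hden).2 ?_⟩
    exact Gamma_mul_Gamma_lt (by linarith) (by linarith) (by linarith) (by ring)
end

section
/- Gauss's hypergeometric evaluation: for real parameters a, b, c with c > a + b and c not a nonpositive integer, the Gauss hypergeometric series ₂F₁(a,b,c;1) = Σ_{n≥0} (a)ₙ(b)ₙ/((c)ₙ n!) converges and equals Γ(c)Γ(c-a-b)/(Γ(c-a)Γ(c-b)). -/
/-!
Write `F(c) = ₂F₁(a, b; c; 1)`. The ratio of consecutive terms is `1 - (c + 1 - a - b)/n + O(n⁻²)`,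
so Raabe's test gives convergence for `c > a + b`. Comparing `F(c)` with `F(c + 1)` term by term
leaves a telescoping sum, whence Gauss's contiguous relation
`c (c - a - b) F(c) = (c - a)(c - b) F(c + 1)`; iterating,
`F(c) = (c - a)ₙ (c - b)ₙ / ((c)ₙ (c - a - b)ₙ) · F(c + n)`.
As `n → ∞`, `F(c + n) → 1` by dominated convergence, and Euler's limit formula
`Γ(x) = lim nˣ n! / (x)ₙ₊₁` turns the Pochhammer ratio into the Gamma ratio.
-/

open Filter Finset Topology

namespace GaussHypergeometric

lemma ascPochhammer_eval_eq_prod_range (n : ℕ) (x : ℝ) :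
    (ascPochhammer ℝ n).eval x = ∏ j ∈ range n, (x + j) := by
  induction n with
  | zero => simp
  | succ n ih => rw [ascPochhammer_succ_eval, prod_range_succ, ih]

lemma ascPochhammer_eval_nonneg {x : ℝ} (hx : 0 ≤ x) (n : ℕ) :
    0 ≤ (ascPochhammer ℝ n).eval x := by
  rw [ascPochhammer_eval_eq_prod_range]
  exact prod_nonneg fun j _ => by positivity

lemma abs_ascPochhammer_eval_le (x : ℝ) (n : ℕ) :
    |(ascPochhammer ℝ n).eval x| ≤ (ascPochhammer ℝ n).eval |x| := by
  rw [ascPochhammer_eval_eq_prod_range, ascPochhammer_eval_eq_prod_range, abs_prod]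
  exact prod_le_prod (fun j _ => abs_nonneg _) fun j _ => (abs_add_le _ _).trans (by simp)

lemma ascPochhammer_eval_le_of_le {x y : ℝ} (hx : 0 ≤ x) (hxy : x ≤ y) (n : ℕ) :
    (ascPochhammer ℝ n).eval x ≤ (ascPochhammer ℝ n).eval y := by
  rw [ascPochhammer_eval_eq_prod_range, ascPochhammer_eval_eq_prod_range]
  exact prod_le_prod (fun j _ => by positivity) fun j _ => by linarith

lemma ascPochhammer_eval_ne_zero {x : ℝ} (hx : ∀ k : ℕ, x ≠ -k) (n : ℕ) :
    (ascPochhammer ℝ n).eval x ≠ 0 := by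
  rw [ne_eq, ascPochhammer_eval_eq_zero_iff]
  rintro ⟨k, -, hk⟩
  exact hx k (by linarith)

lemma add_natCast_ne_neg_natCast {c : ℝ} (hc : ∀ k : ℕ, c ≠ -k) (n : ℕ) :
    ∀ k : ℕ, c + n ≠ -k :=
  fun k hk => hc (k + n) (by push_cast; linarith)

lemma tendsto_ascPochhammer_eval_atTop {n : ℕ} (hn : n ≠ 0) :
    Tendsto (fun x : ℝ => (ascPochhammer ℝ n).eval x) atTop atTop := by
  apply Polynomial.tendsto_atTop_of_leadingCoeff_nonneg
  · rw [Polynomial.degree_eq_natDegree (monic_ascPochhammer ℝ n).ne_zero, ascPochhammer_natDegree]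
    exact_mod_cast Nat.pos_of_ne_zero hn
  · rw [(monic_ascPochhammer ℝ n).leadingCoeff]; exact zero_le_one

lemma inv_GammaSeq (x : ℝ) (n : ℕ) :
    (Real.GammaSeq x n)⁻¹ = (ascPochhammer ℝ (n + 1)).eval x / ((n : ℝ) ^ x * n.factorial) := by
  rw [Real.GammaSeq, ascPochhammer_eval_eq_prod_range, inv_div]

lemma tendsto_ascPochhammer_div_rpow_mul_factorial (x : ℝ) :
    Tendsto (fun n : ℕ => (ascPochhammer ℝ (n + 1)).eval x / ((n : ℝ) ^ x * n.factorial))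
      atTop (𝓝 (Real.Gamma x)⁻¹) := by
  simp_rw [← inv_GammaSeq]
  by_cases hx : Real.Gamma x = 0
  · obtain ⟨m, rfl⟩ := (Real.Gamma_eq_zero_iff x).mp hx
    rw [hx, inv_zero]
    refine tendsto_const_nhds.congr' ?_
    filter_upwards [eventually_ge_atTop m] with n hn
    rw [inv_GammaSeq, ascPochhammer_eval_neg_coe_nat_of_lt (by omega), zero_div]
  · exact (Real.GammaSeq_tendsto_Gamma x).inv₀ hx

lemma tendsto_ascPochhammer_ratio {x y z w : ℝ} (hsum : x + y = z + w)
    (hz : Real.Gamma z ≠ 0) (hw : Real.Gamma w ≠ 0) :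
    Tendsto (fun n : ℕ => (ascPochhammer ℝ n).eval x * (ascPochhammer ℝ n).eval y /
        ((ascPochhammer ℝ n).eval z * (ascPochhammer ℝ n).eval w)) atTop
      (𝓝 (Real.Gamma z * Real.Gamma w / (Real.Gamma x * Real.Gamma y))) := by
  set H := fun (s : ℝ) (n : ℕ) =>
    (ascPochhammer ℝ (n + 1)).eval s / ((n : ℝ) ^ s * n.factorial)
  have hlim : Tendsto (fun n => H x n * H y n / (H z n * H w n)) atTop
      (𝓝 ((Real.Gamma x)⁻¹ * (Real.Gamma y)⁻¹ / ((Real.Gamma z)⁻¹ * (Real.Gamma w)⁻¹))) :=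
    ((tendsto_ascPochhammer_div_rpow_mul_factorial x).mul
      (tendsto_ascPochhammer_div_rpow_mul_factorial y)).div
      ((tendsto_ascPochhammer_div_rpow_mul_factorial z).mul
        (tendsto_ascPochhammer_div_rpow_mul_factorial w)) (by simp [hz, hw])
  rw [← tendsto_add_atTop_iff_nat 1]
  convert hlim.congr' ?_ using 2
  · field_simp
  · filter_upwards [eventually_ge_atTop 1] with n hn
    have hn : (0 : ℝ) < n := by exact_mod_cast hn
    have hD : (n : ℝ) ^ x * n.factorial * ((n : ℝ) ^ y * n.factorial) =
        (n : ℝ) ^ z * n.factorial * ((n : ℝ) ^ w * n.factorial) := by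
      rw [mul_mul_mul_comm, mul_mul_mul_comm _ _ ((n : ℝ) ^ w), ← Real.rpow_add hn,
        ← Real.rpow_add hn, hsum]
    simp only [H, div_mul_div_comm, hD]
    rw [div_div_div_cancel_right₀ (by positivity)]

lemma one_sub_div_mul_rpow_add_one_le {s x : ℝ} (hs : 1 ≤ s) (hx : 0 < x) :
    (1 - s / x) * (x + 1) ^ s ≤ x ^ s := by
  have hx1 : 0 < x + 1 := by linarith
  have bernoulli := one_add_mul_self_le_rpow_one_add (s := -1 / (x + 1)) (by
    rw [neg_div, neg_le_neg_iff, div_le_one hx1]; linarith) hs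
  rw [show 1 + -1 / (x + 1) = x / (x + 1) by field_simp; ring,
    Real.div_rpow hx.le hx1.le, le_div_iff₀ (by positivity)] at bernoulli
  refine le_trans (mul_le_mul_of_nonneg_right ?_ (by positivity)) bernoulli
  have : s / (x + 1) ≤ s / x := by gcongr; linarith
  linarith [show s * (-1 / (x + 1)) = -(s / (x + 1)) by ring]

/-- Raabe's test, in the quantitative form `f n = O(n ^ (-s))`. -/
lemma isBigO_rpow_neg_of_abs_succ_le {f : ℕ → ℝ} {s : ℝ} (hs : 1 ≤ s)
    (h : ∀ᶠ n : ℕ in atTop, |f (n + 1)| ≤ (1 - s / n) * |f n|) :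
    f =O[atTop] fun n : ℕ => (n : ℝ) ^ (-s) := by
  obtain ⟨N, hN⟩ := eventually_atTop.mp (h.and (eventually_ge_atTop 1))
  have hmono : ∀ n, N ≤ n → |f n| * (n : ℝ) ^ s ≤ |f N| * (N : ℝ) ^ s := by
    intro n hn
    induction n, hn using Nat.le_induction with
    | base => exact le_rfl
    | succ n hn ih =>
      obtain ⟨hstep, hn1⟩ := hN n hn
      have hn0 : (0 : ℝ) < n := by exact_mod_cast hn1
      refine le_trans ?_ ih
      calc |f (n + 1)| * ((n + 1 : ℕ) : ℝ) ^ s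
          ≤ (1 - s / n) * |f n| * ((n : ℝ) + 1) ^ s := by
            push_cast; gcongr
        _ = |f n| * ((1 - s / n) * ((n : ℝ) + 1) ^ s) := by ring
        _ ≤ |f n| * (n : ℝ) ^ s := by
            gcongr; exact one_sub_div_mul_rpow_add_one_le hs hn0
  refine Asymptotics.IsBigO.of_bound (|f N| * (N : ℝ) ^ s) ?_
  filter_upwards [eventually_ge_atTop N, eventually_ge_atTop 1] with n hn hn1
  have hn0 : (0 : ℝ) < n := by exact_mod_cast hn1
  rw [Real.norm_eq_abs, Real.norm_of_nonneg (by positivity), Real.rpow_neg hn0.le,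
    ← div_eq_mul_inv, le_div_iff₀ (by positivity)]
  exact hmono n hn

noncomputable def term (a b c : ℝ) (n : ℕ) : ℝ :=
  (ascPochhammer ℝ n).eval a * (ascPochhammer ℝ n).eval b /
    ((ascPochhammer ℝ n).eval c * (n.factorial : ℝ))

lemma term_zero (a b c : ℝ) : term a b c 0 = 1 := by simp [term]

lemma term_succ (a b c : ℝ) (n : ℕ) :
    term a b c (n + 1) = term a b c n * ((a + n) * (b + n) / ((c + n) * (n + 1))) := by
  simp only [term, ascPochhammer_succ_eval, Nat.factorial_succ, div_mul_div_comm]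
  push_cast
  congr 1 <;> ring

lemma term_mul_eq {c : ℝ} (hc : ∀ k : ℕ, c ≠ -k) (a b : ℝ) (n : ℕ) :
    c * term a b c n = (c + n) * term a b (c + 1) n := by
  have hcn := ascPochhammer_eval_ne_zero hc n
  have hc1n : (ascPochhammer ℝ n).eval (c + 1) ≠ 0 :=
    ascPochhammer_eval_ne_zero (by simpa using add_natCast_ne_neg_natCast hc 1) n
  have hpoch : c * (ascPochhammer ℝ n).eval (c + 1) = (ascPochhammer ℝ n).eval c * (c + n) := by
    rw [← ascPochhammer_succ_eval]
    simp [ascPochhammer_succ_left, Polynomial.eval_comp]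
  simp only [term]
  field_simp
  linear_combination ((ascPochhammer ℝ n).eval a * (ascPochhammer ℝ n).eval b) * hpoch

lemma abs_term_succ_le {a b c s : ℝ} (h : a + b + s < c + 1) :
    ∀ᶠ n : ℕ in atTop, |term a b c (n + 1)| ≤ (1 - s / n) * |term a b c n| := by
  have hlin : Tendsto (fun n : ℕ => (c + 1 - s - a - b) * n + (c - s * (c + 1) - a * b))
      atTop atTop :=
    tendsto_atTop_add_const_right _ _ (tendsto_natCast_atTop_atTop.const_mul_atTop (by linarith))
  filter_upwards [hlin.eventually_ge_atTop |s * c|, eventually_ge_atTop 1,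
    tendsto_natCast_atTop_atTop.eventually_gt_atTop (max (max (-a) (-b)) (-c))]
    with n hquad hn1 hn
  have hn0 : (1 : ℝ) ≤ n := by exact_mod_cast hn1
  simp only [max_lt_iff] at hn
  have ha : 0 < a + n := by linarith
  have hb : 0 < b + n := by linarith
  have hc : 0 < c + n := by linarith
  have hratio : (a + n) * (b + n) / ((c + n) * (n + 1)) ≤ 1 - s / n := by
    rw [div_le_iff₀ (by positivity), one_sub_div (by positivity), div_mul_eq_mul_div,
      le_div_iff₀ (by positivity)]
    nlinarith [mul_le_mul_of_nonneg_left hquad (by linarith : (0 : ℝ) ≤ n),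
      mul_nonneg (by linarith : (0 : ℝ) ≤ n - 1) (abs_nonneg (s * c)), le_abs_self (s * c)]
  rw [term_succ, abs_mul, abs_of_pos (div_pos (mul_pos ha hb) (by positivity)), mul_comm]
  exact mul_le_mul_of_nonneg_right hratio (abs_nonneg _)

lemma exists_isBigO_term {a b c : ℝ} (h : a + b < c) :
    ∃ s : ℝ, 1 < s ∧ term a b c =O[atTop] fun n : ℕ => (n : ℝ) ^ (-s) :=
  ⟨(c - a - b) / 2 + 1, by linarith,
    isBigO_rpow_neg_of_abs_succ_le (by linarith) (abs_term_succ_le (by linarith))⟩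

lemma summable_term {a b c : ℝ} (h : a + b < c) : Summable (term a b c) := by
  obtain ⟨s, hs, hO⟩ := exists_isBigO_term h
  exact summable_of_isBigO_nat (Real.summable_nat_rpow.mpr (by linarith)) hO

lemma tendsto_natCast_mul_term {a b c : ℝ} (h : a + b < c) :
    Tendsto (fun n : ℕ => n * term a b c n) atTop (𝓝 0) := by
  obtain ⟨s, hs, hO⟩ := exists_isBigO_term h
  have hdecay : Tendsto (fun n : ℕ => (n : ℝ) * (n : ℝ) ^ (-s)) atTop (𝓝 0) := by
    refine ((tendsto_rpow_neg_atTop (y := s - 1) (by linarith)).comp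
      tendsto_natCast_atTop_atTop).congr' ?_
    filter_upwards [eventually_ge_atTop 1] with n hn
    have hn0 : (0 : ℝ) < n := by exact_mod_cast hn
    rw [Function.comp_apply, neg_sub, sub_eq_add_neg, Real.rpow_add hn0, Real.rpow_one]
  exact ((Asymptotics.isBigO_refl (fun n : ℕ => (n : ℝ)) atTop).mul hO).trans_tendsto hdecay

lemma tsum_sub_succ_eq {f : ℕ → ℝ} {l : ℝ} (hs : Summable fun n => f n - f (n + 1))
    (hf : Tendsto f atTop (𝓝 l)) : ∑' n, (f n - f (n + 1)) = f 0 - l := by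
  refine tendsto_nhds_unique hs.hasSum.tendsto_sum_nat ?_
  simp_rw [sum_range_sub']
  exact tendsto_const_nhds.sub hf

lemma term_contiguous {c : ℝ} (hc : ∀ k : ℕ, c ≠ -k) (a b : ℝ) (k : ℕ) :
    c * (c - a - b) * term a b c k - (c - a) * (c - b) * term a b (c + 1) k =
      c * (k * term a b c k - ((k + 1 : ℕ) : ℝ) * term a b c (k + 1)) := by
  have hck : c + k ≠ 0 := by simpa using add_natCast_ne_neg_natCast hc k 0
  have hshift : term a b (c + 1) k = c * term a b c k / (c + k) := by
    rw [eq_div_iff hck, mul_comm, term_mul_eq hc]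
  rw [hshift, term_succ]
  push_cast
  field_simp
  ring

lemma tsum_term_contiguous {a b c : ℝ} (h : a + b < c) (hc : ∀ k : ℕ, c ≠ -k) :
    c * (c - a - b) * ∑' k, term a b c k = (c - a) * (c - b) * ∑' k, term a b (c + 1) k := by
  have hc0 : c ≠ 0 := by simpa using hc 0
  have hD : Summable fun k => c * (c - a - b) * term a b c k -
      (c - a) * (c - b) * term a b (c + 1) k :=
    ((summable_term h).mul_left _).sub ((summable_term (by linarith)).mul_left _)
  simp_rw [term_contiguous hc] at hD
  have htel := tsum_sub_succ_eq ((summable_mul_left_iff hc0).mp hD)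
    (tendsto_natCast_mul_term h)
  rw [← sub_eq_zero, ← tsum_mul_left, ← tsum_mul_left,
    ← ((summable_term h).mul_left _).tsum_sub ((summable_term (by linarith)).mul_left _)]
  simp_rw [term_contiguous hc]
  rw [tsum_mul_left, htel]
  simp

lemma tsum_term_mul_ascPochhammer_eval {a b c : ℝ} (h : a + b < c) (hc : ∀ k : ℕ, c ≠ -k)
    (n : ℕ) :
    (∑' k, term a b c k) * ((ascPochhammer ℝ n).eval c * (ascPochhammer ℝ n).eval (c - a - b)) =
      (ascPochhammer ℝ n).eval (c - a) * (ascPochhammer ℝ n).eval (c - b) *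
        ∑' k, term a b (c + n) k := by
  induction n with
  | zero => simp
  | succ n ih =>
    have hstep := tsum_term_contiguous (by linarith [(n.cast_nonneg : (0 : ℝ) ≤ n)])
      (add_natCast_ne_neg_natCast hc n) (a := a) (b := b)
    simp only [ascPochhammer_succ_eval]
    rw [Nat.cast_succ, ← add_assoc]
    linear_combination ((c + n) * (c - a - b + n)) * ih +
      ((ascPochhammer ℝ n).eval (c - a) * (ascPochhammer ℝ n).eval (c - b)) * hstep

lemma abs_term_le {c d : ℝ} (hc : 0 < c) (hcd : c ≤ d) (a b : ℝ) (k : ℕ) :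
    |term a b d k| ≤ term |a| |b| c k := by
  have hPc := ascPochhammer_pos k c hc
  have hPd := ascPochhammer_eval_le_of_le hc.le hcd k
  rw [term, term, abs_div, abs_mul, abs_mul, abs_of_pos (hPc.trans_le hPd), Nat.abs_cast]
  have hPa := ascPochhammer_eval_nonneg (abs_nonneg a) k
  have hPb := ascPochhammer_eval_nonneg (abs_nonneg b) k
  exact div_le_div₀ (by positivity)
    (mul_le_mul (abs_ascPochhammer_eval_le a k) (abs_ascPochhammer_eval_le b k) (abs_nonneg _) hPa)
    (by positivity) (by gcongr)

lemma tendsto_term_add_nat (a b c : ℝ) (k : ℕ) :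
    Tendsto (fun n : ℕ => term a b (c + n) k) atTop (𝓝 (if k = 0 then 1 else 0)) := by
  split_ifs with hk
  · subst hk
    simp [term_zero]
  · refine Tendsto.div_atTop tendsto_const_nhds (Tendsto.atTop_mul_const (by positivity) ?_)
    exact (tendsto_ascPochhammer_eval_atTop hk).comp
      (tendsto_atTop_add_const_left _ c tendsto_natCast_atTop_atTop)

lemma tendsto_tsum_term_add_nat (a b c : ℝ) :
    Tendsto (fun n : ℕ => ∑' k, term a b (c + n) k) atTop (𝓝 1) := by
  obtain ⟨n₀, hn₀⟩ := exists_nat_gt (|a| + |b| - c)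
  have hpos : 0 < c + n₀ := by linarith [abs_nonneg a, abs_nonneg b]
  have := tendsto_tsum_of_dominated_convergence (bound := term |a| |b| (c + n₀))
    (summable_term (by linarith)) (tendsto_term_add_nat a b c) ?_
  · rwa [tsum_ite_eq] at this
  filter_upwards [eventually_ge_atTop n₀] with n hn k
  exact abs_term_le hpos (by gcongr) a b k

end GaussHypergeometric

open GaussHypergeometric

/-- Gauss's hypergeometric evaluation: for `c > a + b` and `c` not a nonpositive integer,
`₂F₁(a,b,c;1) = Σ_{n≥0} (a)ₙ(b)ₙ/((c)ₙ n!) = Γ(c)Γ(c-a-b)/(Γ(c-a)Γ(c-b))`. -/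
theorem stmt_7 (a b c : ℝ) (h : a + b < c) (hc : ∀ k : ℕ, c ≠ -(k : ℝ)) :
    HasSum (fun n : ℕ =>
        (ascPochhammer ℝ n).eval a * (ascPochhammer ℝ n).eval b /
          ((ascPochhammer ℝ n).eval c * (n.factorial : ℝ)))
      (Real.Gamma c * Real.Gamma (c - a - b) /
        (Real.Gamma (c - a) * Real.Gamma (c - b))) := by
  have hF (n : ℕ) : ∑' k, term a b c k =
      (ascPochhammer ℝ n).eval (c - a) * (ascPochhammer ℝ n).eval (c - b) /
        ((ascPochhammer ℝ n).eval c * (ascPochhammer ℝ n).eval (c - a - b)) *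
          ∑' k, term a b (c + n) k := by
    rw [div_mul_eq_mul_div, eq_div_iff (mul_ne_zero (ascPochhammer_eval_ne_zero hc n)
      (ascPochhammer_pos n _ (by linarith)).ne'), tsum_term_mul_ascPochhammer_eval h hc]
  have hlim := (tendsto_ascPochhammer_ratio (x := c - a) (y := c - b) (z := c) (w := c - a - b)
    (by ring) (Real.Gamma_ne_zero hc) (Real.Gamma_pos_of_pos (by linarith)).ne').mul
      (tendsto_tsum_term_add_nat a b c)
  rw [mul_one] at hlim
  rw [← tendsto_nhds_unique (tendsto_const_nhds.congr hF) hlim]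
  exact (summable_term h).hasSum
end

section
/- For κ ∈ (0,8), the four-point pure partition function Z(x₁,x₂,x₃,x₄) = (x₄-x₁)^{-2h}(x₃-x₂)^{-2h} z^{2/κ} ₂F₁(4/κ, 1-4/κ, 8/κ; z) / ₂F₁(4/κ, 1-4/κ, 8/κ; 1), where z = (x₂-x₁)(x₄-x₃)/((x₄-x₂)(x₃-x₁)) is the cross-ratio and h = (6-κ)/(2κ), satisfies the asymptotics lim_{x₂→x₁} Z(x₁,x₂,x₃,x₄)/(x₂-x₁)^{2/κ} = C(κ)·(x₄-x₁)^{-h₁₃}(x₃-x₁)^{-h₁₃}(x₄-x₃)^{2/κ}, where h₁₃ = (8-κ)/κ and C(κ) = 1/₂F₁(4/κ, 1-4/κ, 8/κ; 1). -/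
/-!
Near `x₂ = x₁` the cross-ratio factors as `z = (x₂ - x₁) · w(x₂)` with
`w(x₂) = (x₄ - x₃) / ((x₄ - x₂)(x₃ - x₁))` smooth and positive, so `z^{2/κ} / (x₂ - x₁)^{2/κ}`
is `w^{2/κ}`. What is left of `Z / (x₂ - x₁)^{2/κ}` is continuous at `x₂ = x₁`, because `₂F₁` is
the sum of a power series of radius at least `1`, with value `1` at `z = 0`. Evaluating at `x₁`
and collecting exponents, `-2h - 2/κ = -h₁₃`, gives the limit.
-/

/-- The Gauss hypergeometric series `₂F₁(a,b,c;x) = Σₙ (a)ₙ(b)ₙ/((c)ₙ n!) xⁿ`. -/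
noncomputable def hyp2F1 (a b c x : ℝ) : ℝ :=
  ∑' n : ℕ, (ascPochhammer ℝ n).eval a * (ascPochhammer ℝ n).eval b /
      ((ascPochhammer ℝ n).eval c * (n.factorial : ℝ)) * x ^ n

section OrdinaryHypergeometric

variable {𝕂 : Type*} {𝔸 : Type*} [RCLike 𝕂] [NormedDivisionRing 𝔸] [NormedAlgebra 𝕂 𝔸]

/-- A nonpositive integer parameter makes the series a polynomial, otherwise the radius is `1`. -/
theorem one_le_radius_ordinaryHypergeometricSeries (a b c : 𝕂) :
    1 ≤ (ordinaryHypergeometricSeries 𝔸 a b c).radius := by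
  by_cases habc : ∀ k : ℕ, (k : 𝕂) ≠ -a ∧ (k : 𝕂) ≠ -b ∧ (k : 𝕂) ≠ -c
  · exact (ordinaryHypergeometricSeries_radius_eq_one 𝔸 a b c habc).ge
  obtain ⟨k, hk⟩ : ∃ k : ℕ, a = -k ∨ b = -k ∨ c = -k := by
    push Not at habc
    obtain ⟨k, hk⟩ := habc
    refine ⟨k, ?_⟩
    simpa only [ne_eq, @eq_comm _ (k : 𝕂), neg_eq_iff_eq_neg, or_iff_not_imp_left] using hk
  suffices (ordinaryHypergeometricSeries 𝔸 a b c).radius = ⊤ by rw [this]; exact le_top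
  rcases hk with rfl | rfl | rfl
  exacts [ordinaryHypergeometric_radius_top_of_neg_nat₁ 𝔸 b c,
    ordinaryHypergeometric_radius_top_of_neg_nat₂ 𝔸 a c,
    ordinaryHypergeometric_radius_top_of_neg_nat₃ 𝔸 a b]

theorem continuousOn_ordinaryHypergeometric [CompleteSpace 𝔸] (a b c : 𝕂) :
    ContinuousOn (ordinaryHypergeometric a b c : 𝔸 → 𝔸) (Metric.eball 0 1) :=
  (ordinaryHypergeometricSeries 𝔸 a b c).continuousOn.mono
    (Metric.eball_subset_eball (one_le_radius_ordinaryHypergeometricSeries a b c))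

end OrdinaryHypergeometric

theorem hyp2F1_eq_ordinaryHypergeometric (a b c : ℝ) :
    hyp2F1 a b c = ordinaryHypergeometric a b c := by
  ext x
  rw [ordinaryHypergeometric_eq_tsum]
  refine tsum_congr fun n => ?_
  rw [smul_eq_mul, div_eq_mul_inv, mul_inv]
  ring

theorem hyp2F1_zero (a b c : ℝ) : hyp2F1 a b c 0 = 1 := by
  rw [hyp2F1_eq_ordinaryHypergeometric, ordinaryHypergeometric_zero]

theorem continuousAt_hyp2F1_zero (a b c : ℝ) : ContinuousAt (hyp2F1 a b c) 0 := by
  rw [hyp2F1_eq_ordinaryHypergeometric]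
  exact (continuousOn_ordinaryHypergeometric a b c).continuousAt
    (Metric.eball_mem_nhds 0 one_pos)

theorem mul_rpow_div_rpow_left {u w : ℝ} (hu : 0 < u) (hw : 0 ≤ w) (e : ℝ) :
    (u * w) ^ e / u ^ e = w ^ e := by
  rw [Real.mul_rpow hu.le hw, mul_div_cancel_left₀ _ (Real.rpow_pos_of_pos hu e).ne']

theorem rpow_mul_rpow_mul_div_mul_rpow {A B D : ℝ} (hA : 0 < A) (hB : 0 < B) (hD : 0 ≤ D)
    (p e : ℝ) :
    A ^ p * B ^ p * (D / (A * B)) ^ e = A ^ (p - e) * B ^ (p - e) * D ^ e := by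
  rw [Real.div_rpow hD (mul_pos hA hB).le, Real.mul_rpow hA.le hB.le, Real.rpow_sub hA,
    Real.rpow_sub hB]
  field_simp

theorem stmt_15_general (κ : ℝ) (h0 : 0 < κ)
    (x₁ x₃ x₄ : ℝ) (h13 : x₁ < x₃) (h34 : x₃ < x₄) :
    Filter.Tendsto (fun x₂ : ℝ =>
      ((x₄ - x₁) ^ (-(2 * ((6 - κ) / (2 * κ)))) * (x₃ - x₂) ^ (-(2 * ((6 - κ) / (2 * κ)))) *
        ((x₂ - x₁) * (x₄ - x₃) / ((x₄ - x₂) * (x₃ - x₁))) ^ (2 / κ) *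
        (hyp2F1 (4 / κ) (1 - 4 / κ) (8 / κ)
            ((x₂ - x₁) * (x₄ - x₃) / ((x₄ - x₂) * (x₃ - x₁))) /
          hyp2F1 (4 / κ) (1 - 4 / κ) (8 / κ) 1)) / (x₂ - x₁) ^ (2 / κ))
      (nhdsWithin x₁ (Set.Ioo x₁ x₃))
      (nhds ((1 / hyp2F1 (4 / κ) (1 - 4 / κ) (8 / κ) 1) *
        ((x₄ - x₁) ^ (-((8 - κ) / κ)) * (x₃ - x₁) ^ (-((8 - κ) / κ)) *
          (x₄ - x₃) ^ (2 / κ)))) := by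
  set p := -(2 * ((6 - κ) / (2 * κ))) with hp
  set e := 2 / κ with he
  set F := hyp2F1 (4 / κ) (1 - 4 / κ) (8 / κ)
  set z := fun x₂ : ℝ => (x₂ - x₁) * (x₄ - x₃) / ((x₄ - x₂) * (x₃ - x₁))
  set w := fun x₂ : ℝ => (x₄ - x₃) / ((x₄ - x₂) * (x₃ - x₁))
  set G := fun x₂ : ℝ => (x₄ - x₁) ^ p * (x₃ - x₂) ^ p * w x₂ ^ e * (F (z x₂) / F 1)
  have hz : z x₁ = 0 := by simp [z]
  have hden : (x₄ - x₁) * (x₃ - x₁) ≠ 0 := mul_ne_zero (by linarith) (by linarith)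
  have hzc : ContinuousAt z x₁ :=
    (by fun_prop : ContinuousAt (fun x₂ => (x₂ - x₁) * (x₄ - x₃)) x₁).div (by fun_prop) hden
  have hwc : ContinuousAt w x₁ := continuousAt_const.div (by fun_prop) hden
  have hG : ContinuousAt G x₁ := by
    refine ((continuousAt_const.mul (ContinuousAt.rpow_const (by fun_prop) ?_)).mul
      (hwc.rpow_const ?_)).mul
      (((continuousAt_hyp2F1_zero _ _ _).comp_of_eq hzc hz).div_const _)
    · exact Or.inl (by linarith)
    · exact Or.inl (div_ne_zero (by linarith) hden)
  have hG₁ : G x₁ = 1 / F 1 * ((x₄ - x₁) ^ (-((8 - κ) / κ)) * (x₃ - x₁) ^ (-((8 - κ) / κ)) *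
      (x₄ - x₃) ^ e) := by
    have hexp : p - e = -((8 - κ) / κ) := by
      rw [hp, he]
      field_simp
      ring
    simp only [G, w, hz, F, hyp2F1_zero]
    rw [rpow_mul_rpow_mul_div_mul_rpow (by linarith) (by linarith) (by linarith), hexp]
    ring
  have hZG : Set.EqOn (fun x₂ => (x₄ - x₁) ^ p * (x₃ - x₂) ^ p * z x₂ ^ e * (F (z x₂) / F 1) /
      (x₂ - x₁) ^ e) G (Set.Ioo x₁ x₃) := by
    rintro x₂ ⟨hx₁, hx₃⟩
    have hzw : z x₂ = (x₂ - x₁) * w x₂ := by simp only [z, w]; ring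
    have hw₂ : 0 ≤ w x₂ := div_nonneg (by linarith) (mul_nonneg (by linarith) (by linarith))
    simp only [G, hzw, mul_comm _ (F _ / F 1), mul_div_assoc,
      mul_rpow_div_rpow_left (sub_pos.mpr hx₁) hw₂]
  rw [← hG₁]
  exact hG.continuousWithinAt.tendsto.congr' (eventuallyEq_nhdsWithin_of_eqOn hZG).symm

/-- For `κ ∈ (0,8)` and `x₁ < x₃ < x₄`, the four-point pure partition function
`Z(x₁,x₂,x₃,x₄) = (x₄-x₁)^{-2h}(x₃-x₂)^{-2h} z^{2/κ} ₂F₁(4/κ,1-4/κ,8/κ;z)/₂F₁(…;1)`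
(with `z` the cross-ratio and `h = (6-κ)/(2κ)`) satisfies
`lim_{x₂→x₁} Z/(x₂-x₁)^{2/κ} = C(κ)·(x₄-x₁)^{-h₁₃}(x₃-x₁)^{-h₁₃}(x₄-x₃)^{2/κ}`
where `h₁₃ = (8-κ)/κ` and `C(κ) = 1/₂F₁(4/κ,1-4/κ,8/κ;1)`. -/
theorem stmt_15 (κ : ℝ) (h0 : 0 < κ) (h8 : κ < 8)
    (x₁ x₃ x₄ : ℝ) (h13 : x₁ < x₃) (h34 : x₃ < x₄) :
    Filter.Tendsto (fun x₂ : ℝ =>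
      ((x₄ - x₁) ^ (-(2 * ((6 - κ) / (2 * κ)))) * (x₃ - x₂) ^ (-(2 * ((6 - κ) / (2 * κ)))) *
        ((x₂ - x₁) * (x₄ - x₃) / ((x₄ - x₂) * (x₃ - x₁))) ^ (2 / κ) *
        (hyp2F1 (4 / κ) (1 - 4 / κ) (8 / κ)
            ((x₂ - x₁) * (x₄ - x₃) / ((x₄ - x₂) * (x₃ - x₁))) /
          hyp2F1 (4 / κ) (1 - 4 / κ) (8 / κ) 1)) / (x₂ - x₁) ^ (2 / κ))
      (nhdsWithin x₁ (Set.Ioo x₁ x₃))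
      (nhds ((1 / hyp2F1 (4 / κ) (1 - 4 / κ) (8 / κ) 1) *
        ((x₄ - x₁) ^ (-((8 - κ) / κ)) * (x₃ - x₁) ^ (-((8 - κ) / κ)) *
          (x₄ - x₃) ^ (2 / κ)))) :=
  stmt_15_general κ h0 x₁ x₃ x₄ h13 h34
end
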